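/- arXiv:2506.08687 — 3 statements merged into one kernel-verified Lean document; each statement's English description precedes it below -/
import Mathlib

section
/- For a vertex a of a finite simple graph G, the number of maximal matchings of G that cover a equals the sum over all neighbors y of a of the number of maximal matchings of the graph G − a − y (the graph obtained by deleting vertices a and y). -/
open SimpleGraph

/-- `M` is a matching of `G`: a set of edges of `G` that are pairwise non-adjacent. -/
def IsGraphMatching {V : Type*} (G : SimpleGraph V) (M : Set (Sym2 V)) : Prop :=
  M ⊆ G.edgeSet ∧ ∀ e ∈ M, ∀ f ∈ M, e ≠ f → ∀ v : V, ¬(v ∈ e ∧ v ∈ f)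

/-- `M` is a maximal matching of `G`: a matching not properly contained in another matching. -/
def IsMaxlMatching {V : Type*} (G : SimpleGraph V) (M : Set (Sym2 V)) : Prop :=
  IsGraphMatching G M ∧ ∀ M', IsGraphMatching G M' → M ⊆ M' → M' = M

/-- vertex `v` is covered by the matching `M`. -/
def MCovers {V : Type*} (M : Set (Sym2 V)) (v : V) : Prop := ∃ e ∈ M, v ∈ e

/-- `Ψ G`: the number of maximal matchings of `G`. -/
noncomputable def Psi {V : Type*} (G : SimpleGraph V) : ℕ :=
  {M : Set (Sym2 V) | IsMaxlMatching G M}.ncard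

section Aux

variable {V : Type*}

lemma edge_iff_aux (G : SimpleGraph V) (S : Set V) (e : Sym2 S) :
    e ∈ (G.induce S).edgeSet ↔ Sym2.map Subtype.val e ∈ G.edgeSet := by
  induction e using Sym2.ind with
  | _ u v => simp [SimpleGraph.mem_edgeSet]

lemma mem_of_mem_map_aux {S : Set V} {e : Sym2 S} {v : V}
    (h : v ∈ Sym2.map Subtype.val e) : v ∈ S := by
  obtain ⟨u, _, rfl⟩ := Sym2.mem_map.mp h
  exact u.2

lemma mem_range_sym2map_aux {S : Set V} {e : Sym2 V} (h : ∀ v ∈ e, v ∈ S) :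
    ∃ e' : Sym2 S, Sym2.map Subtype.val e' = e := by
  induction e using Sym2.ind with
  | _ u v =>
    exact ⟨s(⟨u, h u (by simp)⟩, ⟨v, h v (by simp)⟩), by simp⟩

lemma ncard_biUnion_finset_aux {α ι : Type*} [Finite α] (s : Finset ι) (f : ι → Set α)
    (h : ∀ i ∈ s, ∀ j ∈ s, i ≠ j → Disjoint (f i) (f j)) :
    (⋃ i ∈ s, f i).ncard = ∑ i ∈ s, (f i).ncard := by
  classical
  induction s using Finset.induction with
  | empty => simp
  | @insert y t hx ih =>
    rw [Finset.sum_insert hx, Finset.set_biUnion_insert,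
      Set.ncard_union_eq ?_ (Set.toFinite _) (Set.toFinite _),
      ih (fun i hi j hj => h i (Finset.mem_insert_of_mem hi) j (Finset.mem_insert_of_mem hj))]
    rw [Set.disjoint_iUnion_right]
    intro i
    rw [Set.disjoint_iUnion_right]
    intro hi
    exact h y (Finset.mem_insert_self y t) i (Finset.mem_insert_of_mem hi)
      (fun he => hx (he ▸ hi))

variable {G : SimpleGraph V} {a y : V}

/-- If a matching contains `s(a,y)`, every other edge avoids `a` and `y`. -/
lemma avoid_aux {N : Set (Sym2 V)} (hN : IsGraphMatching G N) (h0 : s(a, y) ∈ N)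
    {e : Sym2 V} (he : e ∈ N) (hne : e ≠ s(a, y)) :
    ∀ v ∈ e, v ∈ {v : V | v ≠ a ∧ v ≠ y} := by
  intro v hv
  refine ⟨?_, ?_⟩ <;> rintro rfl
  · exact hN.2 e he _ h0 hne _ ⟨hv, by simp⟩
  · exact hN.2 e he _ h0 hne _ ⟨hv, by simp⟩

lemma matching_insert_aux (hay : G.Adj a y)
    {M' : Set (Sym2 {v : V | v ≠ a ∧ v ≠ y})}
    (hM' : IsGraphMatching (G.induce {v : V | v ≠ a ∧ v ≠ y}) M') :
    IsGraphMatching G (insert s(a, y) (Sym2.map Subtype.val '' M')) := by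
  constructor
  · rintro e (rfl | ⟨e', he', rfl⟩)
    · exact hay
    · exact (edge_iff_aux G _ e').mp (hM'.1 he')
  · rintro e (rfl | ⟨e', he', rfl⟩) f (rfl | ⟨f', hf', rfl⟩) hne v ⟨hve, hvf⟩
    · exact hne rfl
    · rcases Sym2.mem_iff.mp hve with rfl | rfl
      · exact (mem_of_mem_map_aux hvf).1 rfl
      · exact (mem_of_mem_map_aux hvf).2 rfl
    · rcases Sym2.mem_iff.mp hvf with rfl | rfl
      · exact (mem_of_mem_map_aux hve).1 rfl
      · exact (mem_of_mem_map_aux hve).2 rfl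
    · obtain ⟨u, hu, rfl⟩ := Sym2.mem_map.mp hve
      obtain ⟨w, hw, hwu⟩ := Sym2.mem_map.mp hvf
      have hwu' : w = u := Subtype.coe_injective hwu
      subst hwu'
      exact hM'.2 e' he' f' hf' (fun h => hne (by rw [h])) w ⟨hu, hw⟩

lemma matching_preimage_aux {S : Set V} {N : Set (Sym2 V)} (hN : IsGraphMatching G N) :
    IsGraphMatching (G.induce S) (Sym2.map (Subtype.val : S → V) ⁻¹' N) := by
  constructor
  · intro e' he'
    exact (edge_iff_aux G S e').mpr (hN.1 he')
  · intro e' he' f' hf' hne u ⟨hu1, hu2⟩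
    have hne2 : Sym2.map (Subtype.val : S → V) e' ≠ Sym2.map Subtype.val f' :=
      fun h => hne (Sym2.map.injective Subtype.coe_injective h)
    exact hN.2 _ he' _ hf' hne2 u.val
      ⟨Sym2.mem_map.mpr ⟨u, hu1, rfl⟩, Sym2.mem_map.mpr ⟨u, hu2, rfl⟩⟩

lemma key_aux (hay : G.Adj a y) :
    {M : Set (Sym2 V) | IsMaxlMatching G M ∧ s(a, y) ∈ M}.ncard =
      Psi (G.induce {v : V | v ≠ a ∧ v ≠ y}) := by
  set S : Set V := {v : V | v ≠ a ∧ v ≠ y} with hS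
  set F : Set (Sym2 S) → Set (Sym2 V) :=
    fun M' => insert s(a, y) (Sym2.map Subtype.val '' M') with hF
  have he0_not_mem : ∀ M' : Set (Sym2 S), s(a, y) ∉ Sym2.map Subtype.val '' M' := by
    rintro M' ⟨e', _, he⟩
    have : a ∈ Sym2.map (Subtype.val : S → V) e' := by rw [he]; simp
    exact (mem_of_mem_map_aux this).1 rfl
  have himg : F '' {M' : Set (Sym2 S) | IsMaxlMatching (G.induce S) M'} =
      {M : Set (Sym2 V) | IsMaxlMatching G M ∧ s(a, y) ∈ M} := by
    ext M
    constructor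
    · rintro ⟨M', hM', rfl⟩
      refine ⟨⟨matching_insert_aux hay hM'.1, ?_⟩, Set.mem_insert _ _⟩
      intro N hN hsub
      have h0 : s(a, y) ∈ N := hsub (Set.mem_insert _ _)
      have hN' := matching_preimage_aux (S := S) hN
      have hsub' : M' ⊆ Sym2.map Subtype.val ⁻¹' N :=
        fun e' he' => hsub (Set.mem_insert_of_mem _ ⟨e', he', rfl⟩)
      have hNM' : Sym2.map (Subtype.val : S → V) ⁻¹' N = M' := hM'.2 _ hN' hsub'
      ext e
      constructor
      · intro heN
        by_cases he0 : e = s(a, y)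
        · exact he0 ▸ Set.mem_insert _ _
        · obtain ⟨e', rfl⟩ := mem_range_sym2map_aux (avoid_aux hN h0 heN he0)
          have : e' ∈ M' := hNM' ▸ heN
          exact Set.mem_insert_of_mem _ ⟨e', this, rfl⟩
      · exact fun h => hsub h
    · rintro ⟨hM, h0⟩
      refine ⟨Sym2.map Subtype.val ⁻¹' M, ⟨matching_preimage_aux hM.1, ?_⟩, ?_⟩
      · intro N' hN' hsub'
        have hFN : IsGraphMatching G (F N') := matching_insert_aux hay hN'
        have hMsub : M ⊆ F N' := by
          intro e heM
          by_cases he0 : e = s(a, y)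
          · exact he0 ▸ Set.mem_insert _ _
          · obtain ⟨e', rfl⟩ := mem_range_sym2map_aux (avoid_aux hM.1 h0 heM he0)
            exact Set.mem_insert_of_mem _ ⟨e', hsub' heM, rfl⟩
        have hFNM : F N' = M := hM.2 _ hFN hMsub
        apply Set.Subset.antisymm _ hsub'
        intro e' he'
        have : Sym2.map Subtype.val e' ∈ F N' := Set.mem_insert_of_mem _ ⟨e', he', rfl⟩
        rw [hFNM] at this
        exact this
      · -- F (preimage) = M
        apply Set.Subset.antisymm
        · rintro e (rfl | ⟨e', he', rfl⟩)
          · exact h0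
          · exact he'
        · intro e heM
          by_cases he0 : e = s(a, y)
          · exact he0 ▸ Set.mem_insert _ _
          · obtain ⟨e', rfl⟩ := mem_range_sym2map_aux (avoid_aux hM.1 h0 heM he0)
            exact Set.mem_insert_of_mem _ ⟨e', heM, rfl⟩
  rw [← himg, Set.ncard_image_of_injOn, Psi]
  intro M₁ _ M₂ _ hFeq
  have h1 : Sym2.map Subtype.val '' M₁ = Sym2.map Subtype.val '' M₂ := by
    ext e
    constructor
    · intro he
      have : e ∈ F M₂ := hFeq ▸ Set.mem_insert_of_mem _ he
      rcases this with rfl | h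
      · exact absurd he (he0_not_mem M₁)
      · exact h
    · intro he
      have : e ∈ F M₁ := hFeq ▸ Set.mem_insert_of_mem _ he
      rcases this with rfl | h
      · exact absurd he (he0_not_mem M₂)
      · exact h
  exact Set.image_injective.mpr (Sym2.map.injective Subtype.coe_injective) h1

end Aux

/-- `Ψ(G|a) = Σ_{y ∈ N_G(a)} Ψ(G − a − y)`. -/
theorem psi_cover_vertex {V : Type*} [Fintype V] [DecidableEq V]
    (G : SimpleGraph V) [DecidableRel G.Adj] (a : V) :
    {M : Set (Sym2 V) | IsMaxlMatching G M ∧ MCovers M a}.ncard =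
      ∑ y ∈ G.neighborFinset a, Psi (G.induce {v : V | v ≠ a ∧ v ≠ y}) := by
  have hU : {M : Set (Sym2 V) | IsMaxlMatching G M ∧ MCovers M a} =
      ⋃ y ∈ G.neighborFinset a, {M : Set (Sym2 V) | IsMaxlMatching G M ∧ s(a, y) ∈ M} := by
    ext M
    simp only [Set.mem_setOf_eq, Set.mem_iUnion, SimpleGraph.mem_neighborFinset, exists_prop]
    constructor
    · rintro ⟨hM, e, heM, hae⟩
      obtain ⟨y, rfl⟩ := Sym2.mem_iff_exists.mp hae
      exact ⟨y, hM.1.1 heM, hM, heM⟩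
    · rintro ⟨y, _, hM, he⟩
      exact ⟨hM, _, he, by simp⟩
  rw [hU, ncard_biUnion_finset_aux]
  · exact Finset.sum_congr rfl fun y hy => key_aux ((G.mem_neighborFinset a y).mp hy)
  · intro y₁ _ y₂ _ hne
    rw [Set.disjoint_left]
    rintro M ⟨hM, h1⟩ ⟨_, h2⟩
    have hne2 : s(a, y₁) ≠ s(a, y₂) := fun h => hne (Sym2.congr_right.mp h)
    exact hM.1.2 _ h1 _ h2 hne2 a ⟨by simp, by simp⟩
end

section
/- For n ≥ 3, the numbers of maximal matchings of cycle graphs satisfy the recurrence Ψ(C_n) = Ψ(C_{n−2}) + Ψ(C_{n−3}) for n ≥ 6, i.e., the sequence Ψ(C_n) is the Perrin-type sequence with Ψ(C₃) = 3, Ψ(C₄) = 2, Ψ(C₅) = 5. -/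
open SimpleGraph

/-!
Record a set of edges of `C_n` by the word `x : Fin n → Bool` with `x i` true iff the edge
`s(i, i + 1)` is chosen. The set is a maximal matching iff no two consecutive letters are true
and every edge has a covered endpoint, i.e. every window `x (i - 1), x i, x (i + 1)` contains a
true letter. Such cyclic words are the closed walks of length `n` in the graph on pairs of
consecutive letters, so `Ψ(C_n) = tr Tⁿ` for a 4 × 4 transfer matrix `T`. Its minimal polynomial
is `X (X³ - X - 1)`, whence `T⁴ = T² + T` and the Perrin recurrence.
-/

open Finset Matrix

theorem isMaxlMatching_iff_forall_mem_edgeSet {V : Type*} {G : SimpleGraph V}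
    {M : Set (Sym2 V)} :
    IsMaxlMatching G M ↔ IsGraphMatching G M ∧ ∀ e ∈ G.edgeSet, ∃ v ∈ e, MCovers M v := by
  refine ⟨fun hM => ⟨hM.1, fun e he => ?_⟩, fun ⟨hM, hcov⟩ => ⟨hM, fun M' hM' hMM' => ?_⟩⟩
  · by_contra! hfree
    have hins : IsGraphMatching G (insert e M) := by
      refine ⟨Set.insert_subset he hM.1.1, ?_⟩
      rintro f (rfl | hf) g (rfl | hg) hfg v ⟨hvf, hvg⟩
      · exact hfg rfl
      · exact hfree v hvf ⟨g, hg, hvg⟩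
      · exact hfree v hvg ⟨f, hf, hvf⟩
      · exact hM.1.2 f hf g hg hfg v ⟨hvf, hvg⟩
    have heM : e ∈ M := hM.2 _ hins (Set.subset_insert e M) ▸ Set.mem_insert e M
    exact hfree _ e.out_fst_mem ⟨e, heM, e.out_fst_mem⟩
  · refine Set.Subset.antisymm (fun f hf => ?_) hMM'
    obtain ⟨v, hvf, e, he, hve⟩ := hcov f (hM'.1 hf)
    by_cases hef : e = f
    · exact hef ▸ he
    · exact absurd ⟨hve, hvf⟩ (hM'.2 e (hMM' he) f hf hef v)

section TransferMatrix

variable {σ R : Type*} [Fintype σ] [DecidableEq σ] [CommSemiring R]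

theorem Matrix.trace_pow_mul_eq_sum_prod (A B : Matrix σ σ R) (k : ℕ) :
    trace (A ^ k * B) = ∑ w : Fin (k + 1) → σ,
      (∏ i : Fin k, A (w i.castSucc) (w i.succ)) * B (w (Fin.last k)) (w 0) := by
  induction k generalizing B with
  | zero =>
    rw [pow_zero, one_mul, trace, ← (Equiv.funUnique (Fin 1) σ).symm.sum_comp]
    simp
  | succ k ih =>
    rw [pow_succ, mul_assoc, ih, ← (Fin.snocEquiv fun _ : Fin (k + 2) => σ).sum_comp,
      Fintype.sum_prod_type_right]
    refine Finset.sum_congr rfl fun w _ => ?_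
    simp [Fin.prod_univ_castSucc, mul_apply, Finset.mul_sum, mul_assoc, ← Fin.castSucc_succ]

theorem Matrix.trace_pow_succ_eq_sum_prod (A : Matrix σ σ R) (k : ℕ) :
    trace (A ^ (k + 1)) = ∑ w : Fin (k + 1) → σ, ∏ i, A (w i) (w (i + 1)) := by
  rw [pow_succ, trace_pow_mul_eq_sum_prod]
  refine Finset.sum_congr rfl fun w _ => ?_
  simp [Fin.prod_univ_castSucc, Fin.coeSucc_eq_succ]

def transferMatrix (r : σ → σ → Prop) [DecidableRel r] : Matrix σ σ ℕ :=
  of fun a b => if r a b then 1 else 0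

theorem card_cyclic_walks_eq_trace_pow (r : σ → σ → Prop) [DecidableRel r] (k : ℕ) :
    #{w : Fin (k + 1) → σ | ∀ i, r (w i) (w (i + 1))} = trace (transferMatrix r ^ (k + 1)) := by
  simp only [trace_pow_succ_eq_sum_prod, transferMatrix, of_apply, prod_boole, card_filter,
    Finset.mem_univ, true_implies]

end TransferMatrix

section Windows

variable {α : Type*}

/-- Walks in this relation on `α × α` are the sequences of consecutive pairs `(x (i - 1), x i)`
of words `x` whose windows of length three all satisfy `p`. -/
def windowRel (p : α → α → α → Prop) (u v : α × α) : Prop := u.2 = v.1 ∧ p u.1 u.2 v.2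

instance [DecidableEq α] (p : α → α → α → Prop) [∀ a b c, Decidable (p a b c)] :
    DecidableRel (windowRel p) := fun _ _ => instDecidableAnd

theorem card_cyclic_windows_eq_card_cyclic_walks [Fintype α] [DecidableEq α]
    (p : α → α → α → Prop) [∀ a b c, Decidable (p a b c)] (n : ℕ) [NeZero n] :
    #{x : Fin n → α | ∀ i, p (x (i - 1)) (x i) (x (i + 1))} =
      #{w : Fin n → α × α | ∀ i, windowRel p (w i) (w (i + 1))} := by
  have link {w : Fin n → α × α} (hw : ∀ i, windowRel p (w i) (w (i + 1))) (i : Fin n) :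
      (w (i - 1)).2 = (w i).1 := by
    simpa using (hw (i - 1)).1
  refine card_nbij' (fun x i => (x (i - 1), x i)) (fun w i => (w i).2) ?_ ?_ ?_ ?_
  · intro x hx
    rw [Finset.mem_coe, Finset.mem_filter] at hx ⊢
    exact ⟨Finset.mem_univ _, fun i => ⟨by simp, hx.2 i⟩⟩
  · intro w hw
    rw [Finset.mem_coe, Finset.mem_filter] at hw ⊢
    refine ⟨Finset.mem_univ _, fun i => ?_⟩
    simpa [link hw.2] using (hw.2 i).2
  · intro x _
    rfl
  · intro w hw
    rw [Finset.mem_coe, Finset.mem_filter] at hw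
    exact funext fun i => Prod.ext (link hw.2 i) rfl

end Windows

/-- Read on the letters of edges `i - 1`, `i`, `i + 1` of a cycle: edges `i` and `i + 1` are not
both chosen, and vertices `i`, `i + 1` are not both uncovered. -/
def maxlWindow (a b c : Bool) : Bool := !(b && c) && (a || b || c)

section CycleGraph

variable {n : ℕ}

def cycleEdge (i : Fin (n + 3)) : Sym2 (Fin (n + 3)) := s(i, i + 1)

theorem cycleEdge_injective : Function.Injective (cycleEdge (n := n)) := by
  intro i j h
  rcases Sym2.eq_iff.mp h with ⟨hij, -⟩ | ⟨hij, hji⟩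
  · exact hij
  · have : (2 : Fin (n + 3)) = 0 := by grind
    simp [Fin.ext_iff, Nat.mod_eq_of_lt (by omega : 2 < n + 3)] at this

theorem edgeSet_cycleGraph : (cycleGraph (n + 3)).edgeSet = Set.range cycleEdge := by
  ext e
  induction e using Sym2.ind with
  | h u v =>
    simp only [mem_edgeSet, cycleGraph_adj, Set.mem_range, cycleEdge, Sym2.eq_iff]
    grind

def cycleEdges (x : Fin (n + 3) → Bool) : Set (Sym2 (Fin (n + 3))) :=
  cycleEdge '' {i | x i = true}

theorem cycleEdge_mem_cycleEdges {x : Fin (n + 3) → Bool} {i : Fin (n + 3)} :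
    cycleEdge i ∈ cycleEdges x ↔ x i = true :=
  cycleEdge_injective.mem_set_image

theorem cycleEdges_injective : Function.Injective (cycleEdges (n := n)) := by
  intro x y h
  funext i
  rw [Bool.eq_iff_iff, ← cycleEdge_mem_cycleEdges, h, cycleEdge_mem_cycleEdges]

theorem exists_cycleEdges_eq {M : Set (Sym2 (Fin (n + 3)))}
    (hM : M ⊆ (cycleGraph (n + 3)).edgeSet) : ∃ x, cycleEdges x = M := by
  classical
  refine ⟨fun i => decide (cycleEdge i ∈ M), ?_⟩
  simp only [cycleEdges, decide_eq_true_eq]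
  exact Set.image_preimage_eq_of_subset (edgeSet_cycleGraph ▸ hM)

theorem mCovers_cycleEdges {x : Fin (n + 3) → Bool} {v : Fin (n + 3)} :
    MCovers (cycleEdges x) v ↔ x (v - 1) = true ∨ x v = true := by
  constructor
  · rintro ⟨_, ⟨i, hi, rfl⟩, hv⟩
    rcases Sym2.mem_iff.mp hv with rfl | rfl
    · exact Or.inr hi
    · exact Or.inl (by rwa [add_sub_cancel_right])
  · rintro (h | h)
    · exact ⟨_, ⟨v - 1, h, rfl⟩, by simp [cycleEdge]⟩
    · exact ⟨_, ⟨v, h, rfl⟩, Sym2.mem_mk_left _ _⟩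

theorem isGraphMatching_cycleEdges {x : Fin (n + 3) → Bool} :
    IsGraphMatching (cycleGraph (n + 3)) (cycleEdges x) ↔
      ∀ i, ¬(x i = true ∧ x (i + 1) = true) := by
  constructor
  · rintro hM i ⟨hi, hi'⟩
    have hne : cycleEdge i ≠ cycleEdge (i + 1) := cycleEdge_injective.ne (by simp)
    exact hM.2 _ (cycleEdge_mem_cycleEdges.2 hi) _ (cycleEdge_mem_cycleEdges.2 hi') hne (i + 1)
      ⟨Sym2.mem_mk_right _ _, Sym2.mem_mk_left _ _⟩
  · intro h
    refine ⟨edgeSet_cycleGraph ▸ Set.image_subset_range _ _, ?_⟩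
    rintro _ ⟨i, hi, rfl⟩ _ ⟨j, hj, rfl⟩ hij v ⟨hvi, hvj⟩
    rcases Sym2.mem_iff.mp hvi with rfl | rfl <;> rcases Sym2.mem_iff.mp hvj with hv | hv
    · exact hij (by rw [hv])
    · exact h j ⟨hj, hv ▸ hi⟩
    · exact h i ⟨hi, hv ▸ hj⟩
    · exact hij (by rw [add_right_cancel hv])

theorem isMaxlMatching_cycleEdges {x : Fin (n + 3) → Bool} :
    IsMaxlMatching (cycleGraph (n + 3)) (cycleEdges x) ↔
      ∀ i, maxlWindow (x (i - 1)) (x i) (x (i + 1)) = true := by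
  simp only [isMaxlMatching_iff_forall_mem_edgeSet, isGraphMatching_cycleEdges,
    edgeSet_cycleGraph, Set.forall_mem_range, cycleEdge, Sym2.mem_iff, exists_eq_or_imp,
    exists_eq_left, mCovers_cycleEdges, add_sub_cancel_right, ← forall_and]
  refine forall_congr' fun i => ?_
  cases x (i - 1) <;> cases x i <;> cases x (i + 1) <;> decide

theorem psi_cycleGraph_eq_card :
    Psi (cycleGraph (n + 3)) =
      #{x : Fin (n + 3) → Bool | ∀ i, maxlWindow (x (i - 1)) (x i) (x (i + 1)) = true} := by
  set words : Finset (Fin (n + 3) → Bool) :=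
    {x | ∀ i, maxlWindow (x (i - 1)) (x i) (x (i + 1)) = true}
  have hset : {M | IsMaxlMatching (cycleGraph (n + 3)) M} = cycleEdges '' words := by
    ext M
    simp only [words, Finset.coe_filter, Finset.mem_univ, true_and, Set.mem_image,
      Set.mem_ofPred_eq]
    constructor
    · intro hM
      obtain ⟨x, rfl⟩ := exists_cycleEdges_eq hM.1.1
      exact ⟨x, isMaxlMatching_cycleEdges.1 hM, rfl⟩
    · rintro ⟨x, hx, rfl⟩
      exact isMaxlMatching_cycleEdges.2 hx
  rw [Psi, hset, Set.ncard_image_of_injective _ cycleEdges_injective, Set.ncard_coe_finset]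

end CycleGraph

def perrinTransfer : Matrix (Bool × Bool) (Bool × Bool) ℕ :=
  transferMatrix (windowRel fun a b c => maxlWindow a b c)

theorem psi_cycleGraph_eq_trace (n : ℕ) :
    Psi (cycleGraph (n + 3)) = trace (perrinTransfer ^ (n + 3)) :=
  psi_cycleGraph_eq_card.trans <|
    (card_cyclic_windows_eq_card_cyclic_walks (fun a b c => maxlWindow a b c = true) _).trans
      (card_cyclic_walks_eq_trace_pow _ _)

theorem perrinTransfer_pow_four : perrinTransfer ^ 4 = perrinTransfer ^ 2 + perrinTransfer := by
  decide

theorem trace_perrinTransfer_pow_add_four (k : ℕ) :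
    trace (perrinTransfer ^ (k + 4)) =
      trace (perrinTransfer ^ (k + 2)) + trace (perrinTransfer ^ (k + 1)) := by
  rw [pow_add, perrinTransfer_pow_four, mul_add, trace_add, ← pow_add, ← pow_succ]

/-- `Ψ(C_n) = Ψ(C_{n−2}) + Ψ(C_{n−3})` for `n ≥ 6`, with `Ψ(C₃) = 3`, `Ψ(C₄) = 2`, `Ψ(C₅) = 5`. -/
theorem psi_cycle_recurrence :
    Psi (cycleGraph 3) = 3 ∧ Psi (cycleGraph 4) = 2 ∧ Psi (cycleGraph 5) = 5 ∧
      ∀ n : ℕ, 6 ≤ n →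
        Psi (cycleGraph n) = Psi (cycleGraph (n - 2)) + Psi (cycleGraph (n - 3)) := by
  refine ⟨(psi_cycleGraph_eq_trace 0).trans (by decide),
    (psi_cycleGraph_eq_trace 1).trans (by decide),
    (psi_cycleGraph_eq_trace 2).trans (by decide), fun n hn => ?_⟩
  obtain ⟨k, rfl⟩ := Nat.exists_eq_add_of_le' hn
  rw [show k + 6 - 2 = (k + 1) + 3 by omega, show k + 6 - 3 = k + 3 by omega]
  simpa only [psi_cycleGraph_eq_trace] using trace_perrinTransfer_pow_add_four (k + 2)
end

section
/- For the path graph P_n on n vertices, the number of maximal matchings satisfies Ψ(P_n) = Ψ(P_{n−2}) + Ψ(P_{n−3}) for n ≥ 4, with initial values Ψ(P₁) = 1, Ψ(P₂) = 1, Ψ(P₃) = 2. -/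
open SimpleGraph

def pedge (k i : ℕ) : Sym2 (Fin (k+1)) :=
  s(⟨i % (k+1), Nat.mod_lt _ (Nat.succ_pos k)⟩, ⟨(i+1) % (k+1), Nat.mod_lt _ (Nat.succ_pos k)⟩)

lemma pedge_eq {k i : ℕ} (h : i < k) :
    pedge k i = s(⟨i, by omega⟩, ⟨i+1, by omega⟩) := by
  have h1 : i % (k+1) = i := Nat.mod_eq_of_lt (by omega)
  have h2 : (i+1) % (k+1) = i+1 := Nat.mod_eq_of_lt (by omega)
  simp [pedge, h1, h2]

lemma mem_pedge {k i : ℕ} (h : i < k) (v : Fin (k+1)) :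
    v ∈ pedge k i ↔ v.val = i ∨ v.val = i + 1 := by
  rw [pedge_eq h, Sym2.mem_iff]
  simp [Fin.ext_iff]

lemma pedge_inj {k i j : ℕ} (hi : i < k) (hj : j < k) (h : pedge k i = pedge k j) : i = j := by
  rw [pedge_eq hi, pedge_eq hj] at h
  rw [Sym2.eq_iff] at h
  simp only [Fin.mk.injEq] at h
  omega

lemma mem_pathGraph_edgeSet {k : ℕ} (e : Sym2 (Fin (k+1))) :
    e ∈ (pathGraph (k+1)).edgeSet ↔ ∃ i, i < k ∧ e = pedge k i := by
  induction e using Sym2.ind with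
  | _ u v =>
    rw [SimpleGraph.mem_edgeSet, SimpleGraph.pathGraph_adj]
    constructor
    · rintro (h | h)
      · have hv := v.isLt
        refine ⟨u.val, by omega, ?_⟩
        rw [pedge_eq (by omega), Sym2.eq_iff]
        exact Or.inl ⟨Fin.ext rfl, Fin.ext h.symm⟩
      · have hu := u.isLt
        refine ⟨v.val, by omega, ?_⟩
        rw [pedge_eq (by omega), Sym2.eq_iff]
        exact Or.inr ⟨Fin.ext h.symm, Fin.ext rfl⟩
    · rintro ⟨i, hi, h⟩
      rw [pedge_eq hi, Sym2.eq_iff] at h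
      rcases h with ⟨rfl, rfl⟩ | ⟨rfl, rfl⟩
      · exact Or.inl rfl
      · exact Or.inr rfl

def goodP (m : ℕ) (S : Finset ℕ) : Prop :=
  (∀ i ∈ S, i + 1 ∉ S) ∧ ∀ i < m, i ∈ S ∨ i + 1 ∈ S ∨ ∃ j ∈ S, j + 1 = i

instance (m : ℕ) (S : Finset ℕ) : Decidable (goodP m S) := by
  unfold goodP; infer_instance

def goodF (m : ℕ) : Finset (Finset ℕ) :=
  ((Finset.range m).powerset).filter (goodP m)

def aa (m : ℕ) : ℕ := (goodF m).card

lemma mem_goodF {m : ℕ} {S : Finset ℕ} :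
    S ∈ goodF m ↔ (∀ i ∈ S, i < m) ∧ (∀ i ∈ S, i + 1 ∉ S) ∧
      ∀ i < m, i ∈ S ∨ i + 1 ∈ S ∨ ∃ j ∈ S, j + 1 = i := by
  simp [goodF, goodP, Finset.subset_iff, and_assoc]

def phi (k : ℕ) (S : Finset ℕ) : Set (Sym2 (Fin (k+1))) := {e | ∃ i ∈ S, e = pedge k i}

lemma maxl_iff (k : ℕ) :
    {M | IsMaxlMatching (pathGraph (k+1)) M} = phi k '' (goodF k : Set (Finset ℕ)) := by
  classical
  ext M
  simp only [Set.mem_setOf_eq, Set.mem_image, Finset.mem_coe]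
  constructor
  · rintro ⟨⟨hsub, hpair⟩, hmax⟩
    set S := (Finset.range k).filter (fun i => pedge k i ∈ M) with hSdef
    have hmemS : ∀ i, i ∈ S ↔ i < k ∧ pedge k i ∈ M := by
      intro i; simp [hSdef]
    have hMS : M = phi k S := by
      ext e; constructor
      · intro he
        obtain ⟨i, hi, rfl⟩ := (mem_pathGraph_edgeSet e).mp (hsub he)
        exact ⟨i, (hmemS i).mpr ⟨hi, he⟩, rfl⟩
      · rintro ⟨i, hiS, rfl⟩
        exact ((hmemS i).mp hiS).2
    refine ⟨S, mem_goodF.mpr ⟨?_, ?_, ?_⟩, hMS.symm⟩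
    · intro i hi; exact ((hmemS i).mp hi).1
    · intro i hi hi1
      obtain ⟨hik, hie⟩ := (hmemS i).mp hi
      obtain ⟨hik1, hie1⟩ := (hmemS _).mp hi1
      have hne : pedge k i ≠ pedge k (i+1) := fun h => by
        have := pedge_inj hik hik1 h; omega
      exact hpair _ hie _ hie1 hne ⟨i+1, by omega⟩
        ⟨(mem_pedge hik _).mpr (Or.inr rfl), (mem_pedge hik1 _).mpr (Or.inl rfl)⟩
    · intro i hik
      by_contra hcon
      push_neg at hcon
      obtain ⟨hiS, hi1S, hjS⟩ := hcon
      have hiM : pedge k i ∉ M := fun h => hiS ((hmemS i).mpr ⟨hik, h⟩)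
      have hM' : IsGraphMatching (pathGraph (k+1)) (insert (pedge k i) M) := by
        constructor
        · intro e he
          rcases Set.mem_insert_iff.mp he with rfl | he
          · exact (mem_pathGraph_edgeSet _).mpr ⟨i, hik, rfl⟩
          · exact hsub he
        · intro e he f hf hef v
          rintro ⟨hve, hvf⟩
          rcases Set.mem_insert_iff.mp he with rfl | he <;>
            rcases Set.mem_insert_iff.mp hf with rfl | hf
          · exact hef rfl
          · obtain ⟨j, hj, rfl⟩ := (mem_pathGraph_edgeSet _).mp (hsub hf)
            have hjS' : j ∈ S := (hmemS j).mpr ⟨hj, hf⟩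
            have hv1 := (mem_pedge hik v).mp hve
            have hv2 := (mem_pedge hj v).mp hvf
            have hij : i ≠ j := fun h => hiM (h ▸ hf)
            have : i + 1 = j ∨ j + 1 = i := by omega
            rcases this with h | h
            · exact hi1S (h ▸ hjS')
            · exact hjS j hjS' h
          · obtain ⟨j, hj, rfl⟩ := (mem_pathGraph_edgeSet _).mp (hsub he)
            have hjS' : j ∈ S := (hmemS j).mpr ⟨hj, he⟩
            have hv1 := (mem_pedge hik v).mp hvf
            have hv2 := (mem_pedge hj v).mp hve
            have hij : i ≠ j := fun h => hiM (h ▸ he)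
            have : i + 1 = j ∨ j + 1 = i := by omega
            rcases this with h | h
            · exact hi1S (h ▸ hjS')
            · exact hjS j hjS' h
          · exact hpair e he f hf hef v ⟨hve, hvf⟩
      have h' := hmax _ hM' (Set.subset_insert _ _)
      exact hiM (h' ▸ Set.mem_insert _ _)
  · rintro ⟨S, hS, rfl⟩
    obtain ⟨h1, h2, h3⟩ := mem_goodF.mp hS
    have hmatch : IsGraphMatching (pathGraph (k+1)) (phi k S) := by
      constructor
      · rintro e ⟨i, hiS, rfl⟩
        exact (mem_pathGraph_edgeSet _).mpr ⟨i, h1 i hiS, rfl⟩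
      · rintro e ⟨i, hiS, rfl⟩ f ⟨j, hjS, rfl⟩ hef v ⟨hv1, hv2⟩
        have hik := h1 i hiS
        have hjk := h1 j hjS
        have hm1 := (mem_pedge hik v).mp hv1
        have hm2 := (mem_pedge hjk v).mp hv2
        have hij : i ≠ j := fun h => hef (by rw [h])
        have : i + 1 = j ∨ j + 1 = i := by omega
        rcases this with h | h
        · exact h2 i hiS (h ▸ hjS)
        · exact h2 j hjS (h ▸ hiS)
    refine ⟨hmatch, ?_⟩
    intro M' hM' hsub'
    apply Set.Subset.antisymm _ hsub'
    intro e he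
    obtain ⟨i, hik, rfl⟩ := (mem_pathGraph_edgeSet e).mp (hM'.1 he)
    by_cases hiS : i ∈ S
    · exact ⟨i, hiS, rfl⟩
    · exfalso
      rcases h3 i hik with h | h | ⟨j, hj, hj'⟩
      · exact hiS h
      · have hmem : pedge k (i+1) ∈ M' := hsub' ⟨i+1, h, rfl⟩
        have hlt : i + 1 < k := h1 _ h
        have hne : pedge k i ≠ pedge k (i+1) := fun hh => by
          have := pedge_inj hik hlt hh; omega
        exact hM'.2 _ he _ hmem hne ⟨i+1, by omega⟩
          ⟨(mem_pedge hik _).mpr (Or.inr rfl), (mem_pedge hlt _).mpr (Or.inl rfl)⟩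
      · have hmem : pedge k j ∈ M' := hsub' ⟨j, hj, rfl⟩
        have hlt : j < k := h1 _ hj
        have hne : pedge k i ≠ pedge k j := fun hh => by
          have := pedge_inj hik hlt hh; omega
        exact hM'.2 _ he _ hmem hne ⟨i, by omega⟩
          ⟨(mem_pedge hik _).mpr (Or.inl rfl), (mem_pedge hlt _).mpr (Or.inr hj'.symm)⟩

lemma psi_eq (k : ℕ) : Psi (pathGraph (k+1)) = aa k := by
  have hinj : Set.InjOn (phi k) (goodF k : Set (Finset ℕ)) := by
    intro S hS T hT h
    have key : ∀ S T : Finset ℕ, S ∈ goodF k → T ∈ goodF k → phi k S = phi k T →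
        ∀ i ∈ S, i ∈ T := by
      intro S T hS hT h i hi
      have hik : i < k := (mem_goodF.mp hS).1 i hi
      have : pedge k i ∈ phi k T := h ▸ ⟨i, hi, rfl⟩
      obtain ⟨j, hj, hj'⟩ := this
      have hjk : j < k := (mem_goodF.mp hT).1 j hj
      have := pedge_inj hik hjk hj'
      exact this ▸ hj
    exact Finset.ext fun i => ⟨fun hi => key S T hS hT h i hi, fun hi => key T S hT hS h.symm i hi⟩
  rw [Psi, maxl_iff, Set.ncard_image_of_injOn hinj, Set.ncard_coe_finset]
  rfl


lemma aa0 : aa 0 = 1 := by decide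
lemma aa1 : aa 1 = 1 := by decide
lemma aa2 : aa 2 = 2 := by decide

lemma goodF_split (k : ℕ) :
    goodF (k+3) = (goodF (k+1)).image (insert (k+2)) ∪ (goodF k).image (insert (k+1)) := by
  ext S
  simp only [Finset.mem_union, Finset.mem_image]
  constructor
  · intro hS
    obtain ⟨h1, h2, h3⟩ := mem_goodF.mp hS
    by_cases hc : k + 2 ∈ S
    · left
      refine ⟨S.erase (k+2), ?_, ?_⟩
      · refine mem_goodF.mpr ⟨?_, ?_, ?_⟩
        · intro i hi
          obtain ⟨hne, hiS⟩ := Finset.mem_erase.mp hi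
          have : i < k + 3 := h1 i hiS
          have hk1 : i ≠ k + 1 := by
            rintro rfl
            exact h2 _ hiS hc
          omega
        · intro i hi
          obtain ⟨_, hiS⟩ := Finset.mem_erase.mp hi
          intro h
          exact h2 i hiS (Finset.mem_of_mem_erase h)
        · intro i hi
          rcases h3 i (by omega) with h | h | ⟨j, hj, hj'⟩
          · exact Or.inl (Finset.mem_erase.mpr ⟨by omega, h⟩)
          · exact Or.inr (Or.inl (Finset.mem_erase.mpr ⟨by omega, h⟩))
          · exact Or.inr (Or.inr ⟨j, Finset.mem_erase.mpr ⟨by omega, hj⟩, hj'⟩)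
      · exact Finset.insert_erase hc
    · right
      have hk1 : k + 1 ∈ S := by
        rcases h3 (k+2) (by omega) with h | h | ⟨j, hj, hj'⟩
        · exact absurd h hc
        · exact absurd (h1 _ h) (by omega)
        · have : j = k + 1 := by omega
          exact this ▸ hj
      refine ⟨S.erase (k+1), ?_, Finset.insert_erase hk1⟩
      refine mem_goodF.mpr ⟨?_, ?_, ?_⟩
      · intro i hi
        obtain ⟨hne, hiS⟩ := Finset.mem_erase.mp hi
        have : i < k + 3 := h1 i hiS
        have hik : i ≠ k := by
          rintro rfl
          exact h2 _ hiS hk1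
        have : i ≠ k + 2 := fun h => hc (h ▸ hiS)
        omega
      · intro i hi
        obtain ⟨_, hiS⟩ := Finset.mem_erase.mp hi
        intro h
        exact h2 i hiS (Finset.mem_of_mem_erase h)
      · intro i hi
        rcases h3 i (by omega) with h | h | ⟨j, hj, hj'⟩
        · exact Or.inl (Finset.mem_erase.mpr ⟨by omega, h⟩)
        · exact Or.inr (Or.inl (Finset.mem_erase.mpr ⟨by omega, h⟩))
        · exact Or.inr (Or.inr ⟨j, Finset.mem_erase.mpr ⟨by omega, hj⟩, hj'⟩)
  · rintro (⟨T, hT, rfl⟩ | ⟨T, hT, rfl⟩)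
    · obtain ⟨h1, h2, h3⟩ := mem_goodF.mp hT
      refine mem_goodF.mpr ⟨?_, ?_, ?_⟩
      · intro i hi
        rcases Finset.mem_insert.mp hi with rfl | hi
        · omega
        · have := h1 i hi; omega
      · intro i hi h
        rcases Finset.mem_insert.mp hi with rfl | hi
        · rcases Finset.mem_insert.mp h with h | h
          · omega
          · have := h1 _ h; omega
        · rcases Finset.mem_insert.mp h with h | h
          · have := h1 _ hi; omega
          · exact h2 i hi h
      · intro i hi
        rcases Nat.lt_or_ge i (k+1) with h | h
        · rcases h3 i h with h' | h' | ⟨j, hj, hj'⟩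
          · exact Or.inl (Finset.mem_insert_of_mem h')
          · exact Or.inr (Or.inl (Finset.mem_insert_of_mem h'))
          · exact Or.inr (Or.inr ⟨j, Finset.mem_insert_of_mem hj, hj'⟩)
        · rcases Nat.lt_or_ge i (k+2) with h' | h'
          · have : i = k + 1 := by omega
            subst this
            exact Or.inr (Or.inl (Finset.mem_insert_self _ _))
          · have : i = k + 2 := by omega
            subst this
            exact Or.inl (Finset.mem_insert_self _ _)
    · obtain ⟨h1, h2, h3⟩ := mem_goodF.mp hT
      refine mem_goodF.mpr ⟨?_, ?_, ?_⟩
      · intro i hi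
        rcases Finset.mem_insert.mp hi with rfl | hi
        · omega
        · have := h1 i hi; omega
      · intro i hi h
        rcases Finset.mem_insert.mp hi with rfl | hi
        · rcases Finset.mem_insert.mp h with h | h
          · omega
          · have := h1 _ h; omega
        · rcases Finset.mem_insert.mp h with h | h
          · have := h1 _ hi; omega
          · exact h2 i hi h
      · intro i hi
        rcases Nat.lt_or_ge i k with h | h
        · rcases h3 i h with h' | h' | ⟨j, hj, hj'⟩
          · exact Or.inl (Finset.mem_insert_of_mem h')
          · exact Or.inr (Or.inl (Finset.mem_insert_of_mem h'))
          · exact Or.inr (Or.inr ⟨j, Finset.mem_insert_of_mem hj, hj'⟩)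
        · rcases Nat.lt_or_ge i (k+1) with h' | h'
          · have : i = k := by omega
            subst this
            exact Or.inr (Or.inl (Finset.mem_insert_self _ _))
          · rcases Nat.lt_or_ge i (k+2) with h'' | h''
            · have : i = k + 1 := by omega
              subst this
              exact Or.inl (Finset.mem_insert_self _ _)
            · have : i = k + 2 := by omega
              subst this
              exact Or.inr (Or.inr ⟨k+1, Finset.mem_insert_self _ _, rfl⟩)

lemma aa_rec (k : ℕ) : aa (k+3) = aa (k+1) + aa k := by
  have hinj1 : Set.InjOn (insert (k+2)) (goodF (k+1) : Set (Finset ℕ)) := by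
    intro T1 h1 T2 h2 h
    have n1 : k + 2 ∉ T1 := fun hh => by have := (mem_goodF.mp h1).1 _ hh; omega
    have n2 : k + 2 ∉ T2 := fun hh => by have := (mem_goodF.mp h2).1 _ hh; omega
    rw [← Finset.erase_insert n1, ← Finset.erase_insert n2, h]
  have hinj2 : Set.InjOn (insert (k+1)) (goodF k : Set (Finset ℕ)) := by
    intro T1 h1 T2 h2 h
    have n1 : k + 1 ∉ T1 := fun hh => by have := (mem_goodF.mp h1).1 _ hh; omega
    have n2 : k + 1 ∉ T2 := fun hh => by have := (mem_goodF.mp h2).1 _ hh; omega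
    rw [← Finset.erase_insert n1, ← Finset.erase_insert n2, h]
  have hdisj : Disjoint ((goodF (k+1)).image (insert (k+2))) ((goodF k).image (insert (k+1))) := by
    rw [Finset.disjoint_left]
    rintro S hS1 hS2
    obtain ⟨T1, hT1, rfl⟩ := Finset.mem_image.mp hS1
    obtain ⟨T2, hT2, hEq⟩ := Finset.mem_image.mp hS2
    have : k + 2 ∈ insert (k+1) T2 := hEq ▸ Finset.mem_insert_self _ _
    rcases Finset.mem_insert.mp this with h | h
    · omega
    · have := (mem_goodF.mp hT2).1 _ h; omega
  rw [aa, goodF_split, Finset.card_union_of_disjoint hdisj,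
    Finset.card_image_of_injOn hinj1, Finset.card_image_of_injOn hinj2]
  rfl


/-- `Ψ(P_n) = Ψ(P_{n−2}) + Ψ(P_{n−3})` for `n ≥ 4`, with `Ψ(P₁) = 1`, `Ψ(P₂) = 1`, `Ψ(P₃) = 2`. -/
theorem psi_path_recurrence :
    Psi (pathGraph 1) = 1 ∧ Psi (pathGraph 2) = 1 ∧ Psi (pathGraph 3) = 2 ∧
      ∀ n : ℕ, 4 ≤ n →
        Psi (pathGraph n) = Psi (pathGraph (n - 2)) + Psi (pathGraph (n - 3)) := by
  refine ⟨(psi_eq 0).trans aa0, (psi_eq 1).trans aa1, (psi_eq 2).trans aa2, ?_⟩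
  intro n hn
  obtain ⟨k, rfl⟩ : ∃ k, n = k + 4 := ⟨n - 4, by omega⟩
  have h2 : k + 4 - 2 = k + 2 := by omega
  have h3 : k + 4 - 3 = k + 1 := by omega
  rw [h2, h3]
  have e1 : Psi (pathGraph (k+4)) = aa (k+3) := psi_eq (k+3)
  have e2 : Psi (pathGraph (k+2)) = aa (k+1) := psi_eq (k+1)
  have e3 : Psi (pathGraph (k+1)) = aa k := psi_eq k
  rw [e1, e2, e3, aa_rec]
end
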